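/- Fazel–Hindi–Boyd characterization of the trace norm: for a complex square matrix A and t ∈ ℝ, ‖A‖_tr ≤ t if and only if there exist Hermitian matrices Y and Z such that the block matrix [[Y, A],[A†, Z]] is positive semidefinite and tr Y + tr Z ≤ 2t. -/

import Mathlib

/-!
Write `R = |A| = √(AᴴA)` and `W = A R⁺` for the polar factor of `A`, where `R⁺ = cfc (·⁻¹) R` is
the Moore–Penrose inverse of `R` (the junk value `0⁻¹ = 0` makes the functional calculus produce
it). Then `W R = A`, `Wᴴ A = R` and `W Wᴴ W = W`, so `W Wᴴ` is an orthogonal projection.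

If `tr R ≤ t`, take `Y = W R Wᴴ` and `Z = R`: the block matrix is `Xᴴ R X` with `X = (Wᴴ 1)`,
and `tr Y = tr (Wᴴ W R) = tr R`. Conversely, compressing a positive block matrix by `(Wᴴ, -1)`
gives `tr (Wᴴ Y W) + tr Z ≥ 2 Re tr (Wᴴ A) = 2 tr R`, and `tr (Wᴴ Y W) ≤ tr Y` because
`1 - W Wᴴ` is a projection and `Y ≥ 0`.
-/

open Matrix BigOperators ComplexOrder

/-- The trace norm `‖A‖_tr = tr √(A†A)`, the sum of the singular values of `A`. -/
noncomputable def traceNorm {n : Type*} [Fintype n] [DecidableEq n]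
    (A : Matrix n n ℂ) : ℝ :=
  ((Matrix.posSemidef_conjTranspose_mul_self A).1.eigenvectorUnitary.1 *
    diagonal ((fun x : ℝ => (x : ℂ)) ∘ Real.sqrt ∘ (Matrix.posSemidef_conjTranspose_mul_self A).1.eigenvalues) *
    (star (Matrix.posSemidef_conjTranspose_mul_self A).1.eigenvectorUnitary : Matrix n n ℂ)).trace.re

open scoped MatrixOrder

namespace Matrix

variable {𝕜 m n : Type*} [RCLike 𝕜] [Fintype m] [Fintype n]

section FunctionalCalculus

variable [DecidableEq n]

lemma cfc_mul_cfc (f g : ℝ → ℝ) (R : Matrix n n 𝕜) :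
    cfc f R * cfc g R = cfc (fun x ↦ f x * g x) R :=
  (cfc_mul f g R (finite_real_spectrum.continuousOn _) (finite_real_spectrum.continuousOn _)).symm

variable {R : Matrix n n 𝕜} (hR : R.IsHermitian)
include hR

lemma IsHermitian.mul_cfc (f : ℝ → ℝ) : R * cfc f R = cfc (fun x ↦ x * f x) R := by
  calc R * cfc f R = cfc id R * cfc f R := by rw [cfc_id ℝ R hR.isSelfAdjoint]
    _ = cfc (fun x ↦ x * f x) R := cfc_mul_cfc _ _ R

lemma IsHermitian.cfc_mul (f : ℝ → ℝ) : cfc f R * R = cfc (fun x ↦ f x * x) R := by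
  calc cfc f R * R = cfc f R * cfc id R := by rw [cfc_id ℝ R hR.isSelfAdjoint]
    _ = cfc (fun x ↦ f x * x) R := cfc_mul_cfc _ _ R

lemma IsHermitian.mul_self_eq_cfc : R * R = cfc (fun x : ℝ ↦ x * x) R := by
  calc R * R = R * cfc id R := by rw [cfc_id ℝ R hR.isSelfAdjoint]
    _ = cfc (fun x : ℝ ↦ x * x) R := hR.mul_cfc _

end FunctionalCalculus

lemma mul_eq_self_of_conjTranspose_mul_self_mul_eq {A : Matrix m n 𝕜} {P : Matrix n n 𝕜}
    (hP : P.IsHermitian) (h : Aᴴ * A * P = Aᴴ * A) : A * P = A := by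
  have hP' : P * (Aᴴ * A) = Aᴴ * A := by
    simpa [hP.eq, Matrix.mul_assoc] using congrArg conjTranspose h
  have expand : (A - A * P)ᴴ * (A - A * P)
      = Aᴴ * A - Aᴴ * A * P - P * (Aᴴ * A) + P * (Aᴴ * A) * P := by
    simp only [conjTranspose_sub, conjTranspose_mul, hP.eq, Matrix.sub_mul, Matrix.mul_sub,
      Matrix.mul_assoc]
    abel
  have : (A - A * P)ᴴ * (A - A * P) = 0 := by
    rw [expand, hP', h]
    abel
  exact (sub_eq_zero.mp (conjTranspose_mul_self_eq_zero.mp this)).symm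

section PolarDecomposition

variable [DecidableEq n]

noncomputable def polarFactor (A : Matrix n n 𝕜) : Matrix n n 𝕜 :=
  A * cfc (·⁻¹ : ℝ → ℝ) (CFC.abs A)

variable (A : Matrix n n 𝕜)

lemma posSemidef_abs : (CFC.abs A).PosSemidef := (CFC.abs_nonneg A).posSemidef

lemma conjTranspose_polarFactor_mul_polarFactor :
    (polarFactor A)ᴴ * polarFactor A = cfc (fun x : ℝ ↦ x⁻¹ * x) (CFC.abs A) := by
  have hR := (posSemidef_abs A).isHermitian
  have hS : (cfc (·⁻¹ : ℝ → ℝ) (CFC.abs A)).IsHermitian := cfc_predicate _ _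
  rw [polarFactor, conjTranspose_mul, hS.eq, Matrix.mul_assoc, ← Matrix.mul_assoc Aᴴ,
    ← star_eq_conjTranspose, ← CFC.abs_mul_abs]
  simp only [Matrix.mul_assoc, hR.mul_cfc, cfc_mul_cfc]
  congr 1 with x
  by_cases hx : x = 0 <;> simp [hx]

lemma polarFactor_mul_abs : polarFactor A * CFC.abs A = A := by
  have hR := (posSemidef_abs A).isHermitian
  rw [polarFactor, Matrix.mul_assoc, hR.cfc_mul]
  refine mul_eq_self_of_conjTranspose_mul_self_mul_eq (cfc_predicate _ _) ?_
  rw [← star_eq_conjTranspose, ← CFC.abs_mul_abs, Matrix.mul_assoc, hR.mul_cfc, hR.mul_cfc,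
    hR.mul_self_eq_cfc]
  congr 1 with x
  by_cases hx : x = 0 <;> simp [hx]

lemma conjTranspose_polarFactor_mul_polarFactor_mul_abs :
    (polarFactor A)ᴴ * polarFactor A * CFC.abs A = CFC.abs A := by
  have hR := (posSemidef_abs A).isHermitian
  rw [conjTranspose_polarFactor_mul_polarFactor, hR.cfc_mul]
  conv_rhs => rw [← cfc_id' ℝ (CFC.abs A) hR.isSelfAdjoint]
  congr 1 with x
  by_cases hx : x = 0 <;> simp [hx]

lemma conjTranspose_polarFactor_mul_self : (polarFactor A)ᴴ * A = CFC.abs A := by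
  calc (polarFactor A)ᴴ * A = (polarFactor A)ᴴ * (polarFactor A * CFC.abs A) := by
        rw [polarFactor_mul_abs]
    _ = CFC.abs A := by
        rw [← Matrix.mul_assoc, conjTranspose_polarFactor_mul_polarFactor_mul_abs]

lemma polarFactor_mul_conjTranspose_mul_self :
    polarFactor A * (polarFactor A)ᴴ * polarFactor A = polarFactor A := by
  rw [Matrix.mul_assoc, conjTranspose_polarFactor_mul_polarFactor, polarFactor, Matrix.mul_assoc,
    cfc_mul_cfc]
  congr 2 with x
  by_cases hx : x = 0 <;> simp [hx]

end PolarDecomposition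

lemma posSemidef_fromBlocks_of_mul_eq [DecidableEq n] {R : Matrix n n 𝕜} (hR : R.PosSemidef)
    {W A : Matrix m n 𝕜} (hWR : W * R = A) : (fromBlocks (W * R * Wᴴ) A Aᴴ R).PosSemidef := by
  have hRW : R * Wᴴ = Aᴴ := by rw [← hWR, conjTranspose_mul, hR.isHermitian.eq]
  have hblock : (fromCols Wᴴ 1)ᴴ * R * fromCols Wᴴ 1 = fromBlocks (W * R * Wᴴ) A Aᴴ R := by
    rw [conjTranspose_fromCols_eq_fromRows_conjTranspose, fromRows_mul, fromRows_mul_fromCols]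
    simp [hWR, hRW]
  exact hblock ▸ hR.conjTranspose_mul_mul_same _

lemma PosSemidef.re_trace_conjTranspose_mul_mul_le [DecidableEq m] {Y : Matrix m m 𝕜}
    (hY : Y.PosSemidef) {W : Matrix m n 𝕜} (hW : W * Wᴴ * W = W) :
    RCLike.re (Wᴴ * Y * W).trace ≤ RCLike.re Y.trace := by
  have hQ : W * Wᴴ * (W * Wᴴ) = W * Wᴴ := by rw [← Matrix.mul_assoc, hW]
  set E := 1 - W * Wᴴ
  have hE : Eᴴ = E := by simp [E]
  have hEE : E * E = E := by
    simp only [E, Matrix.sub_mul, Matrix.mul_sub, Matrix.one_mul, Matrix.mul_one, hQ]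
    abel
  have htrace : (E * Y * Eᴴ).trace = Y.trace - (Wᴴ * Y * W).trace := by
    rw [hE, trace_mul_cycle, hEE, Matrix.sub_mul, trace_sub, Matrix.one_mul, trace_mul_cycle Wᴴ]
  have hnonneg := (RCLike.nonneg_iff.mp (hY.mul_mul_conjTranspose_same E).trace_nonneg).1
  rw [htrace, map_sub] at hnonneg
  linarith

lemma two_mul_re_trace_le_of_posSemidef_fromBlocks [DecidableEq m] [DecidableEq n]
    {Y : Matrix m m 𝕜} {Z : Matrix n n 𝕜} {A W : Matrix m n 𝕜}
    (hM : (fromBlocks Y A Aᴴ Z).PosSemidef) (hW : W * Wᴴ * W = W) :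
    2 * RCLike.re (Wᴴ * A).trace ≤ RCLike.re Y.trace + RCLike.re Z.trace := by
  have hY : Y.PosSemidef := hM.submatrix Sum.inl
  set X : Matrix n (m ⊕ n) 𝕜 := fromCols Wᴴ (-1)
  have hblock : X * fromBlocks Y A Aᴴ Z * Xᴴ = Wᴴ * Y * W - Wᴴ * A - Aᴴ * W + Z := by
    rw [conjTranspose_fromCols_eq_fromRows_conjTranspose, fromCols_mul_fromBlocks,
      fromCols_mul_fromRows]
    simp only [Matrix.neg_mul, Matrix.one_mul, conjTranspose_conjTranspose, Matrix.add_mul,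
      neg_mul, one_mul, conjTranspose_neg, conjTranspose_one, mul_neg, mul_one, neg_add_rev,
      neg_neg]
    abel
  have hnonneg := (RCLike.nonneg_iff.mp
    (hblock ▸ hM.mul_mul_conjTranspose_same X).trace_nonneg).1
  have hAW : RCLike.re (Aᴴ * W).trace = RCLike.re (Wᴴ * A).trace := by
    rw [← conjTranspose_conjTranspose W, ← conjTranspose_mul, trace_conjTranspose,
      conjTranspose_conjTranspose, RCLike.star_def, RCLike.conj_re]
  simp only [trace_add, trace_sub, map_add, map_sub, hAW] at hnonneg
  linarith [hY.re_trace_conjTranspose_mul_mul_le hW]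

end Matrix

theorem traceNorm_eq_re_trace_abs {n : Type*} [Fintype n] [DecidableEq n] (A : Matrix n n ℂ) :
    traceNorm A = (CFC.abs A).trace.re := by
  rw [CFC.abs, star_eq_conjTranspose,
    CFC.sqrt_eq_real_sqrt _ (posSemidef_conjTranspose_mul_self A).nonneg, cfcₙ_eq_cfc,
    (posSemidef_conjTranspose_mul_self A).1.cfc_eq]
  rfl

theorem stmt_12 {n : Type*} [Fintype n] [DecidableEq n]
    (A : Matrix n n ℂ) (t : ℝ) :
    traceNorm A ≤ t ↔
      ∃ Y Z : Matrix n n ℂ, Y.IsHermitian ∧ Z.IsHermitian ∧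
        (Matrix.fromBlocks Y A Aᴴ Z).PosSemidef ∧
        Y.trace.re + Z.trace.re ≤ 2 * t := by
  have hR := posSemidef_abs A
  rw [traceNorm_eq_re_trace_abs]
  constructor
  · intro h
    refine ⟨polarFactor A * CFC.abs A * (polarFactor A)ᴴ, CFC.abs A,
      (hR.mul_mul_conjTranspose_same _).isHermitian, hR.isHermitian,
      posSemidef_fromBlocks_of_mul_eq hR (polarFactor_mul_abs A), ?_⟩
    rw [trace_mul_cycle, conjTranspose_polarFactor_mul_polarFactor_mul_abs]
    linarith
  · rintro ⟨Y, Z, -, -, hM, htrace⟩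
    have key := two_mul_re_trace_le_of_posSemidef_fromBlocks hM
      (polarFactor_mul_conjTranspose_mul_self A)
    rw [conjTranspose_polarFactor_mul_self] at key
    simp only [RCLike.re_to_complex] at key
    linarith
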